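/- Adopt the orthogonal decomposition Ṽ = V ⊕ span(e, f) with ⟨e,e⟩ = ⟨f,f⟩ = 0 and ⟨e,f⟩ = −1. Let K̃ ⊆ Ṽ ⊗ k be a characteristic subspace with e ⊗ 1 ∉ K̃, let K = π_e(K̃), and let σ be the Artin invariant of K. If σ ≥ 2, then there exists an isotropic vector v ∈ Ṽ (v ≠ 0, ⟨v,v⟩ = 0) such that ⟨v, e⟩ ≠ 0, v ⊗ 1 ∉ K̃, and ⟨v, x⟩ = 0 for every x ∈ Ṽ with x ⊗ 1 ∈ K̃. -/

import Mathlib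

open TensorProduct

section Basics

variable (p : ℕ) [Fact p.Prime]
variable (k : Type*) [Field k] [CharP k p] [Algebra (ZMod p) k]

/-- The `p`-th power map on `k` as a `ZMod p`-linear map. -/
noncomputable def frobL : k →ₗ[ZMod p] k where
  toFun x := x ^ p
  map_add' x y := add_pow_char x y p
  map_smul' c x := by
    simp only [Algebra.smul_def, mul_pow, RingHom.id_apply]
    congr 1
    rw [← map_pow, ZMod.pow_card]

@[simp] lemma frobL_apply (x : k) : frobL p k x = x ^ p := rfl

instance frobSurj [IsAlgClosed k] : RingHomSurjective (frobenius k p) := by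
  constructor
  intro y
  obtain ⟨z, hz⟩ := IsAlgClosed.exists_pow_nat_eq y (n := p) (Fact.out (p := p.Prime)).pos
  exact ⟨z, by simpa [frobenius_def] using hz⟩

variable (V : Type*) [AddCommGroup V] [Module (ZMod p) V]

private lemma rT_smul (c : k) (m : k ⊗[ZMod p] V) :
    LinearMap.rTensor V (frobL p k) (c • m) = c ^ p • LinearMap.rTensor V (frobL p k) m := by
  induction m using TensorProduct.induction_on with
  | zero => simp
  | tmul a x => simp [TensorProduct.smul_tmul', smul_eq_mul, mul_pow]
  | add x y hx hy => simp [smul_add, hx, hy]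

/-- The Frobenius-semilinear bijection `φ` of `k ⊗ V` determined by `φ(s ⊗ x) = s^p ⊗ x`. -/
noncomputable def phiT : (k ⊗[ZMod p] V) →ₛₗ[frobenius k p] (k ⊗[ZMod p] V) where
  toFun := LinearMap.rTensor V (frobL p k)
  map_add' x y := map_add _ x y
  map_smul' c m := by
    show LinearMap.rTensor V (frobL p k) (c • m) = (frobenius k p) c • LinearMap.rTensor V (frobL p k) m
    rw [rT_smul, frobenius_def]

@[simp] lemma phiT_apply (m : k ⊗[ZMod p] V) :
    phiT p k V m = LinearMap.rTensor V (frobL p k) m := rfl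

/-- A bilinear form is non-degenerate if its radical is zero. -/
def Nondeg {R M : Type*} [CommSemiring R] [AddCommMonoid M] [Module R M]
    (b : M →ₗ[R] M →ₗ[R] R) : Prop :=
  ∀ x, (∀ y, b x y = 0) → x = 0

/-- A bilinear form is non-neutral if there is no totally isotropic subspace of half
dimension. -/
def NonNeutral {R M : Type*} [CommRing R] [AddCommGroup M] [Module R M]
    (b : M →ₗ[R] M →ₗ[R] R) : Prop :=
  ¬ ∃ W : Submodule R M, (∀ x ∈ W, ∀ y ∈ W, b x y = 0) ∧
      2 * Module.finrank R ↥W = Module.finrank R M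

variable {p k V}

/-- A characteristic subspace of `V ⊗ k`, where `dim V = 2σ₀`: a totally isotropic
`k`-subspace of dimension `σ₀` with `dim (K + φ K) = σ₀ + 1`. -/
def IsCharSub [IsAlgClosed k] (σ₀ : ℕ) (b : LinearMap.BilinForm (ZMod p) V)
    (K : Submodule k (k ⊗[ZMod p] V)) : Prop :=
  (∀ x ∈ K, ∀ y ∈ K, b.baseChange k x y = 0) ∧
  Module.finrank k ↥K = σ₀ ∧
  Module.finrank k ↥(K ⊔ K.map (phiT p k V)) = σ₀ + 1

/-- `{x ∈ V : x ⊗ 1 ∈ K}` as an `𝔽_p`-subspace of `V`. -/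
def KcapV (K : Submodule k (k ⊗[ZMod p] V)) : Submodule (ZMod p) V where
  carrier := {x | (1 : k) ⊗ₜ[ZMod p] x ∈ K}
  add_mem' := by
    intro a b ha hb
    simp only [Set.mem_setOf_eq] at *
    rw [TensorProduct.tmul_add]
    exact K.add_mem ha hb
  zero_mem' := by
    simp only [Set.mem_setOf_eq, TensorProduct.tmul_zero]
    exact K.zero_mem
  smul_mem' := by
    intro c x hx
    simp only [Set.mem_setOf_eq] at *
    rw [TensorProduct.tmul_smul]
    exact K.smul_of_tower_mem c hx

end Basics

section Quot

variable {p : ℕ} [Fact p.Prime]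
variable {Vt : Type*} [AddCommGroup Vt] [Module (ZMod p) Vt]

/-- The orthogonal complement of a vector. -/
def perp (b : LinearMap.BilinForm (ZMod p) Vt) (v : Vt) : Submodule (ZMod p) Vt :=
  LinearMap.ker (b v)

lemma self_mem_perp {b : LinearMap.BilinForm (ZMod p) Vt} {v : Vt} (hv : b v v = 0) :
    v ∈ perp b v := LinearMap.mem_ker.mpr hv

/-- The line spanned by an isotropic vector `v`, inside `v^⊥`. -/
noncomputable def lineV (b : LinearMap.BilinForm (ZMod p) Vt) (v : Vt) (hv : b v v = 0) :
    Submodule (ZMod p) (perp b v) :=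
  Submodule.span (ZMod p) {⟨v, self_mem_perp hv⟩}

lemma lineV_le (b : LinearMap.BilinForm (ZMod p) Vt) (v : Vt) (hv : b v v = 0)
    {P : Submodule (ZMod p) (perp b v)}
    (h : (⟨v, self_mem_perp hv⟩ : perp b v) ∈ P) : lineV b v hv ≤ P :=
  Submodule.span_le.mpr (Set.singleton_subset_iff.mpr h)

/-- The quotient `v^⊥ / ⟨v⟩`. -/
noncomputable abbrev Vquot (b : LinearMap.BilinForm (ZMod p) Vt) (v : Vt)
    (hv : b v v = 0) := (perp b v) ⧸ (lineV b v hv)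

/-- Restriction of the form to `v^⊥`. -/
noncomputable def bRes (b : LinearMap.BilinForm (ZMod p) Vt) (v : Vt) :
    LinearMap.BilinForm (ZMod p) (perp b v) :=
  b.compl₁₂ (perp b v).subtype (perp b v).subtype

lemma bRes_apply (b : LinearMap.BilinForm (ZMod p) Vt) (v : Vt) (x y : perp b v) :
    bRes b v x y = b x y := by
  simp [bRes]

noncomputable def bQuotAux (b : LinearMap.BilinForm (ZMod p) Vt) (v : Vt)
    (hsymm : ∀ x y, b x y = b y x) (hv : b v v = 0) :
    (perp b v) →ₗ[ZMod p] (Vquot b v hv) →ₗ[ZMod p] (ZMod p) where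
  toFun x := Submodule.liftQ (lineV b v hv) (bRes b v x) (lineV_le b v hv (by
    rw [LinearMap.mem_ker, bRes_apply, hsymm]
    exact LinearMap.mem_ker.mp x.2))
  map_add' x y := by
    apply LinearMap.ext
    intro z
    obtain ⟨w, rfl⟩ := Submodule.Quotient.mk_surjective _ z
    simp only [Submodule.liftQ_apply, LinearMap.add_apply, bRes_apply,
      Submodule.coe_add, map_add]
  map_smul' c x := by
    apply LinearMap.ext
    intro z
    obtain ⟨w, rfl⟩ := Submodule.Quotient.mk_surjective _ z
    simp only [Submodule.liftQ_apply, LinearMap.smul_apply, bRes_apply,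
      Submodule.coe_smul, map_smul, RingHom.id_apply, smul_eq_mul]

/-- The symmetric bilinear form induced on `v^⊥/⟨v⟩` by the form of `Ṽ`. -/
noncomputable def bQuot (b : LinearMap.BilinForm (ZMod p) Vt) (v : Vt)
    (hsymm : ∀ x y, b x y = b y x) (hv : b v v = 0) :
    LinearMap.BilinForm (ZMod p) (Vquot b v hv) :=
  Submodule.liftQ (lineV b v hv) (bQuotAux b v hsymm hv) (lineV_le b v hv (by
    rw [LinearMap.mem_ker]
    apply LinearMap.ext
    intro z
    obtain ⟨w, rfl⟩ := Submodule.Quotient.mk_surjective _ z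
    simp only [bQuotAux, LinearMap.coe_mk, AddHom.coe_mk, Submodule.liftQ_apply,
      bRes_apply, LinearMap.zero_apply]
    exact LinearMap.mem_ker.mp w.2))

variable (k : Type*) [Field k] [CharP k p] [Algebra (ZMod p) k]

/-- The base change to `k` of the inclusion `v^⊥ ⊆ Ṽ`. -/
noncomputable def iotaPerp (b : LinearMap.BilinForm (ZMod p) Vt) (v : Vt) :
    (k ⊗[ZMod p] ↥(perp b v)) →ₗ[k] (k ⊗[ZMod p] Vt) :=
  LinearMap.baseChange k (perp b v).subtype

/-- The base change to `k` of the quotient map `v^⊥ → v^⊥/⟨v⟩`. -/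
noncomputable def qMap (b : LinearMap.BilinForm (ZMod p) Vt) (v : Vt) (hv : b v v = 0) :
    (k ⊗[ZMod p] ↥(perp b v)) →ₗ[k] (k ⊗[ZMod p] (Vquot b v hv)) :=
  LinearMap.baseChange k (lineV b v hv).mkQ

/-- `π_v(K̃)`: the image of `K̃ ∩ (v^⊥ ⊗ k)` under the quotient map
`v^⊥ ⊗ k → (v^⊥/⟨v⟩) ⊗ k`. -/
noncomputable def piV (b : LinearMap.BilinForm (ZMod p) Vt) (v : Vt) (hv : b v v = 0)
    (K : Submodule k (k ⊗[ZMod p] Vt)) : Submodule k (k ⊗[ZMod p] (Vquot b v hv)) :=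
  (K.comap (iotaPerp k b v)).map (qMap k b v hv)

end Quot
section Decomp

variable {p : ℕ} [Fact p.Prime]
variable {k : Type*} [Field k] [CharP k p] [Algebra (ZMod p) k]
variable {V Vt : Type*} [AddCommGroup V] [Module (ZMod p) V]
  [AddCommGroup Vt] [Module (ZMod p) Vt]

/-- The characteristic subspace `K(B)` of `Ṽ ⊗ k` attached to a characteristic subspace
`K ⊆ V ⊗ k` and a vector `B ∈ V ⊗ k`: the span of `{x + ⟨x,B⟩v : x ∈ K}` together with
`w + B + (B²/2)v`. -/
noncomputable def KB (bV : LinearMap.BilinForm (ZMod p) V) (j : V →ₗ[ZMod p] Vt)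
    (v w : Vt) (K : Submodule k (k ⊗[ZMod p] V)) (B : k ⊗[ZMod p] V) :
    Submodule k (k ⊗[ZMod p] Vt) :=
  Submodule.span k
    (((fun x => LinearMap.baseChange k j x + (bV.baseChange k x B) • ((1 : k) ⊗ₜ[ZMod p] v)) '' K) ∪
      {(1 : k) ⊗ₜ[ZMod p] w + LinearMap.baseChange k j B +
        ((bV.baseChange k B B) / 2) • ((1 : k) ⊗ₜ[ZMod p] v)})

/-- `π_v(K̃)` computed using the fixed orthogonal decomposition `Ṽ = V ⊕ ⟨v,w⟩`:
the subspace of those `x ∈ V ⊗ k` admitting a lift `x + c·(v ⊗ 1)` lying in `K̃`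
(equivalently, whose image in `Ṽ ⊗ k` lies in `K̃ + ⟨v ⊗ 1⟩`). -/
noncomputable def projSub (j : V →ₗ[ZMod p] Vt) (v : Vt)
    (Kt : Submodule k (k ⊗[ZMod p] Vt)) : Submodule k (k ⊗[ZMod p] V) :=
  (Kt ⊔ Submodule.span k {(1 : k) ⊗ₜ[ZMod p] v}).comap (LinearMap.baseChange k j)

lemma mem_projSub {j : V →ₗ[ZMod p] Vt} {v : Vt} {Kt : Submodule k (k ⊗[ZMod p] Vt)}
    (x : k ⊗[ZMod p] V) (c : k)
    (h : LinearMap.baseChange k j x + c • ((1 : k) ⊗ₜ[ZMod p] v) ∈ Kt) :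
    x ∈ projSub j v Kt := by
  have : LinearMap.baseChange k j x
      = (LinearMap.baseChange k j x + c • ((1 : k) ⊗ₜ[ZMod p] v))
        + (-c) • ((1 : k) ⊗ₜ[ZMod p] v) := by
    first
      | (rw [neg_smul]; abel)
      | simp only [neg_smul, add_neg_cancel_right]
      | simp
      | module
  rw [projSub, Submodule.mem_comap, this]
  exact Submodule.add_mem _ (Submodule.mem_sup_left h)
    (Submodule.mem_sup_right (Submodule.smul_mem _ _ (Submodule.mem_span_singleton_self _)))

variable [IsAlgClosed k]

/-- The condition `B - φ(B) ∈ K + φ(K)` defining `U(K)` before quotienting. -/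
def UCond (K : Submodule k (k ⊗[ZMod p] V)) (B : k ⊗[ZMod p] V) : Prop :=
  B - phiT p k V B ∈ K ⊔ K.map (phiT p k V)

/-- `{B ∈ V ⊗ k : B - φ(B) ∈ K + φ(K)}` as an additive group. -/
def Ugrp (K : Submodule k (k ⊗[ZMod p] V)) : AddSubgroup (k ⊗[ZMod p] V) where
  carrier := {B | B - phiT p k V B ∈ K ⊔ K.map (phiT p k V)}
  add_mem' := by
    intro a b ha hb
    simp only [Set.mem_setOf_eq] at *
    have e : a + b - phiT p k V (a + b) = (a - phiT p k V a) + (b - phiT p k V b) := by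
      rw [map_add]; abel
    rw [e]; exact Submodule.add_mem _ ha hb
  zero_mem' := by
    simp only [Set.mem_setOf_eq, map_zero, sub_zero]
    exact Submodule.zero_mem _
  neg_mem' := by
    intro a ha
    simp only [Set.mem_setOf_eq] at *
    have e : -a - phiT p k V (-a) = -(a - phiT p k V a) := by
      rw [map_neg]; abel
    rw [e]; exact Submodule.neg_mem _ ha

lemma mem_Ugrp {K : Submodule k (k ⊗[ZMod p] V)} {B : k ⊗[ZMod p] V} :
    B ∈ Ugrp K ↔ B - phiT p k V B ∈ K ⊔ K.map (phiT p k V) := Iff.rfl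

/-- The group `U(K) = {B : B - φ(B) ∈ K + φ(K)}/K`. -/
noncomputable abbrev UK (K : Submodule k (k ⊗[ZMod p] V)) :=
  (↥(Ugrp K)) ⧸ ((K.toAddSubgroup).addSubgroupOf (Ugrp K))

lemma one_tmul_mem_Ugrp (K : Submodule k (k ⊗[ZMod p] V)) (x : V) :
    (1 : k) ⊗ₜ[ZMod p] x ∈ Ugrp K := by
  have h : phiT p k V ((1 : k) ⊗ₜ[ZMod p] x) = (1 : k) ⊗ₜ[ZMod p] x := by
    rw [phiT_apply, LinearMap.rTensor_tmul, frobL_apply, one_pow]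
  rw [mem_Ugrp, h, sub_self]
  exact Submodule.zero_mem _

/-- The natural map `V → U(K)`, `x ↦ (x ⊗ 1) mod K`. -/
noncomputable def toUK (K : Submodule k (k ⊗[ZMod p] V)) : V →+ UK K :=
  (QuotientAddGroup.mk' ((K.toAddSubgroup).addSubgroupOf (Ugrp K))).comp
    (AddMonoidHom.codRestrict
      (((TensorProduct.mk (ZMod p) k V) (1 : k)).toAddMonoidHom) (Ugrp K)
      (fun x => one_tmul_mem_Ugrp K x))

/-- Iterates `φ^i(K)`. -/
noncomputable def phiPow (i : ℕ) (K : Submodule k (k ⊗[ZMod p] V)) :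
    Submodule k (k ⊗[ZMod p] V) :=
  (fun S : Submodule k (k ⊗[ZMod p] V) => S.map (phiT p k V))^[i] K

end Decomp

/-! The subspace `W = K̃ ∩ Ṽ` is totally isotropic, and since `e ∉ W`, the quotient map
`e^⊥ → e^⊥/⟨e⟩` embeds `W ∩ e^⊥` into `K ∩ (e^⊥/⟨e⟩)`, which has dimension `σ0 - σ ≤ σ0 - 2`.
Hence `dim W ≤ σ0 - 1`, so `W^⊥` exceeds `W` by at least three dimensions. If `e ⊥ W`, shift a
vector of `W^⊥` not orthogonal to `e` by a multiple of `e` to make it isotropic. Otherwise some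
`w₀ ∈ W` has `⟨w₀, e⟩ ≠ 0`; since ternary quadratic forms over `𝔽_p` are isotropic, `W^⊥ ∖ W`
contains an isotropic `v₀`, and one of `v₀`, `v₀ + w₀` works. -/

open Module

section IsotropicVectors

variable {F M : Type*} [Field F] [AddCommGroup M] [Module F M]

theorem Submodule.finrank_le_finrank_inf_ker_add_one [FiniteDimensional F M]
    (S : Submodule F M) (f : M →ₗ[F] F) :
    finrank F S ≤ finrank F ↥(S ⊓ LinearMap.ker f) + 1 := by
  have hsup := Submodule.finrank_sup_add_finrank_inf_eq S (LinearMap.ker f)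
  have hM := Submodule.finrank_le (S ⊔ LinearMap.ker f)
  have hf := LinearMap.finrank_range_add_finrank_ker f
  have hrange : finrank F (LinearMap.range f) ≤ 1 := by
    simpa using Submodule.finrank_le (LinearMap.range f)
  omega

theorem Submodule.exists_mem_notMem_of_finrank_lt [FiniteDimensional F M]
    {S W : Submodule F M} (h : finrank F W < finrank F S) : ∃ u ∈ S, u ∉ W := by
  by_contra! hSW
  exact (Submodule.finrank_mono hSW).not_gt h

theorem FiniteField.exists_add_mul_sq_add_mul_sq_eq_zero [Fintype F] (hF : ringChar F ≠ 2)
    (a : F) {c d : F} (hc : c ≠ 0) (hd : d ≠ 0) : ∃ x y : F, a + c * x ^ 2 + d * y ^ 2 = 0 := by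
  open Polynomial in
  have hf : (C c * X ^ 2 + C a : F[X]).degree = 2 := by
    rw [degree_add_eq_left_of_degree_lt] <;> rw [degree_C_mul_X_pow 2 hc]
    · rfl
    · exact degree_C_le.trans_lt (by norm_num)
  have hg : (C d * X ^ 2 : F[X]).degree = 2 := by
    rw [degree_C_mul_X_pow 2 hd]; rfl
  obtain ⟨x, y, hxy⟩ :=
    FiniteField.exists_root_sum_quadratic hf hg (FiniteField.odd_card_of_char_ne_two hF)
  refine ⟨x, y, ?_⟩
  simp only [eval_add, eval_mul, eval_C, eval_pow, eval_X] at hxy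
  linear_combination hxy

namespace LinearMap.BilinForm

variable {b : LinearMap.BilinForm F M}

theorem exists_isotropic_add_smul_add_smul [Fintype F] (hF : ringChar F ≠ 2) (hb : b.IsSymm)
    {u₁ u₂ u₃ : M} (h₁₂ : b u₁ u₂ = 0) (h₁₃ : b u₁ u₃ = 0) (h₂₃ : b u₂ u₃ = 0)
    (h₂ : b u₂ u₂ ≠ 0) (h₃ : b u₃ u₃ ≠ 0) :
    ∃ x y : F, b (u₁ + x • u₂ + y • u₃) (u₁ + x • u₂ + y • u₃) = 0 := by
  obtain ⟨x, y, hxy⟩ := FiniteField.exists_add_mul_sq_add_mul_sq_eq_zero hF (b u₁ u₁) h₂ h₃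
  refine ⟨x, y, ?_⟩
  simp only [map_add, map_smul, LinearMap.add_apply, LinearMap.smul_apply, smul_eq_mul,
    h₁₂, h₁₃, h₂₃, hb.eq u₂ u₁, hb.eq u₃ u₁, hb.eq u₃ u₂]
  linear_combination hxy

theorem exists_isotropic_mem_notMem [Fintype F] [FiniteDimensional F M] (hF : ringChar F ≠ 2)
    (hb : b.IsSymm) {W U : Submodule F M} (hWU : ∀ w ∈ W, ∀ u ∈ U, b w u = 0)
    (hdim : finrank F W + 3 ≤ finrank F U) : ∃ v ∈ U, v ∉ W ∧ b v v = 0 := by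
  by_contra! hU
  obtain ⟨u₁, hu₁, hu₁W⟩ :=
    Submodule.exists_mem_notMem_of_finrank_lt (W := W) (S := U) (by omega)
  have hU₁ := Submodule.finrank_le_finrank_inf_ker_add_one U (b u₁)
  obtain ⟨u₂, hu₂, hu₂W⟩ := Submodule.exists_mem_notMem_of_finrank_lt
    (W := W) (S := U ⊓ LinearMap.ker (b u₁)) (by omega)
  have hU₂ := Submodule.finrank_le_finrank_inf_ker_add_one (U ⊓ LinearMap.ker (b u₁)) (b u₂)
  obtain ⟨u₃, hu₃, hu₃W⟩ := Submodule.exists_mem_notMem_of_finrank_lt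
    (W := W) (S := U ⊓ LinearMap.ker (b u₁) ⊓ LinearMap.ker (b u₂)) (by omega)
  simp only [Submodule.mem_inf, LinearMap.mem_ker] at hu₂ hu₃
  obtain ⟨⟨hu₃, h₁₃⟩, h₂₃⟩ := hu₃
  have h₁ := hU u₁ hu₁ hu₁W
  obtain ⟨x, y, hxy⟩ := exists_isotropic_add_smul_add_smul hF hb hu₂.2 h₁₃ h₂₃
    (hU u₂ hu₂.1 hu₂W) (hU u₃ hu₃ hu₃W)
  refine hU _ (U.add_mem (U.add_mem hu₁ (U.smul_mem x hu₂.1)) (U.smul_mem y hu₃)) ?_ hxy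
  intro hW
  -- `u₁` is orthogonal to `W` but not to `u₁ + x u₂ + y u₃`
  apply h₁
  have := hWU _ hW u₁ hu₁
  simpa [hb.eq u₂ u₁, hb.eq u₃ u₁, hu₂.2, h₁₃] using this

theorem exists_isotropic_mem_orthogonal_apply_ne_zero [FiniteDimensional F M]
    (hF : ringChar F ≠ 2) (hb : b.IsSymm) (hnd : b.Nondegenerate) {W : Submodule F M} {e : M}
    (he : b e e = 0) (heW : e ∉ W) (hWe : ∀ w ∈ W, b w e = 0) :
    ∃ v ∈ b.orthogonal W, b v v = 0 ∧ b v e ≠ 0 := by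
  obtain ⟨u, hu, hue⟩ : ∃ u ∈ b.orthogonal W, b u e ≠ 0 := by
    by_contra! h
    refine heW ?_
    rw [← orthogonal_orthogonal hnd hb.isRefl W]
    exact fun u hu => h u hu
  have h2 : (2 : F) ≠ 0 := Ring.two_ne_zero hF
  refine ⟨u - (b u u / (2 * b u e)) • e,
    Submodule.sub_mem _ hu (Submodule.smul_mem _ _ hWe), ?_, ?_⟩
  · simp only [map_sub, map_smul, LinearMap.sub_apply, LinearMap.smul_apply, smul_eq_mul, he,
      hb.eq e u]
    field_simp
    ring
  · simpa [he] using hue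

theorem exists_isotropic_notMem_orthogonal [Fintype F] [FiniteDimensional F M]
    (hF : ringChar F ≠ 2) (hb : b.IsSymm) (hnd : b.Nondegenerate) {W : Submodule F M}
    (hW : ∀ x ∈ W, ∀ y ∈ W, b x y = 0) {e : M} (he : b e e = 0) (heW : e ∉ W)
    (hdim : 2 * finrank F W + 3 ≤ finrank F M) :
    ∃ v, v ∉ W ∧ b v v = 0 ∧ b v e ≠ 0 ∧ ∀ w ∈ W, b v w = 0 := by
  by_cases hWe : ∀ w ∈ W, b w e = 0
  · obtain ⟨v, hv, hvv, hve⟩ :=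
      exists_isotropic_mem_orthogonal_apply_ne_zero hF hb hnd he heW hWe
    exact ⟨v, fun hvW => hve (hWe v hvW), hvv, hve, fun w hw => hb.eq v w ▸ hv w hw⟩
  push Not at hWe
  obtain ⟨w₀, hw₀, hw₀e⟩ := hWe
  have hWW : ∀ w ∈ W, ∀ u ∈ b.orthogonal W, b w u = 0 := fun w hw u hu => hu w hw
  obtain ⟨v₀, hv₀, hv₀W, hv₀v₀⟩ := exists_isotropic_mem_notMem hF hb hWW (by
    rw [finrank_orthogonal hnd]; omega)
  have hv₀' : ∀ w ∈ W, b v₀ w = 0 := fun w hw => hb.eq v₀ w ▸ hv₀ w hw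
  by_cases hv₀e : b v₀ e = 0
  · refine ⟨v₀ + w₀, fun h => hv₀W (by simpa using W.sub_mem h hw₀), ?_, ?_, ?_⟩
    · simp [hv₀v₀, hv₀' w₀ hw₀, hv₀ w₀ hw₀, hW w₀ hw₀ w₀ hw₀]
    · simpa [hv₀e] using hw₀e
    · intro w hw
      simp [hv₀' w hw, hb.eq w₀ w ▸ hW w hw w₀ hw₀]
  · exact ⟨v₀, hv₀W, hv₀v₀, hv₀e, hv₀'⟩

end LinearMap.BilinForm

end IsotropicVectors

section CharacteristicSubspace

variable {p : ℕ} [Fact p.Prime] {k : Type*} [Field k] [Algebra (ZMod p) k]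
  {Vt : Type*} [AddCommGroup Vt] [Module (ZMod p) Vt] {b : LinearMap.BilinForm (ZMod p) Vt}

@[simp]
theorem mem_KcapV {K : Submodule k (k ⊗[ZMod p] Vt)} {x : Vt} :
    x ∈ KcapV K ↔ (1 : k) ⊗ₜ[ZMod p] x ∈ K :=
  Iff.rfl

theorem KcapV_isOrtho {K : Submodule k (k ⊗[ZMod p] Vt)}
    (hK : ∀ x ∈ K, ∀ y ∈ K, b.baseChange k x y = 0) :
    ∀ x ∈ KcapV K, ∀ y ∈ KcapV K, b x y = 0 := by
  intro x hx y hy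
  have hxy := hK _ hx _ hy
  rw [LinearMap.BilinForm.baseChange_tmul, mul_one, ← Algebra.algebraMap_eq_smul_one] at hxy
  exact (FaithfulSMul.algebraMap_eq_zero_iff (ZMod p) k).mp hxy

theorem mkQ_mem_KcapV_piV {e : Vt} (he : b e e = 0) {K : Submodule k (k ⊗[ZMod p] Vt)}
    {x : perp b e} (hx : (x : Vt) ∈ KcapV K) :
    (lineV b e he).mkQ x ∈ KcapV (piV k b e he K) :=
  Submodule.mem_map.mpr ⟨(1 : k) ⊗ₜ x, by simpa [iotaPerp] using hx, by simp [qMap]⟩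

theorem finrank_KcapV_inf_perp_le [FiniteDimensional (ZMod p) Vt] {e : Vt} (he : b e e = 0)
    {K : Submodule k (k ⊗[ZMod p] Vt)} (heK : e ∉ KcapV K) :
    finrank (ZMod p) ↥(KcapV K ⊓ perp b e) ≤ finrank (ZMod p) ↥(KcapV (piV k b e he K)) := by
  let g : ↥(KcapV K ⊓ perp b e) →ₗ[ZMod p] ↥(KcapV (piV k b e he K)) :=
    LinearMap.codRestrict _ ((lineV b e he).mkQ ∘ₗ Submodule.inclusion inf_le_right)
      fun x => mkQ_mem_KcapV_piV he (Submodule.mem_inf.mp x.2).1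
  refine LinearMap.finrank_le_finrank_of_injective (f := g) ?_
  rw [← LinearMap.ker_eq_bot, eq_bot_iff]
  intro x hx
  have hline : Submodule.inclusion inf_le_right x ∈ lineV b e he := by
    simpa [g] using hx
  obtain ⟨c, hc⟩ := Submodule.mem_span_singleton.mp hline
  have hcx : c • e = (x : Vt) := congrArg Subtype.val hc
  obtain rfl | hc0 := eq_or_ne c 0
  · simpa [eq_comm] using hcx
  · refine absurd ?_ heK
    rw [← inv_smul_smul₀ hc0 e, hcx]
    exact (KcapV K).smul_mem _ (Submodule.mem_inf.mp x.2).1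

end CharacteristicSubspace

theorem stmt7_general (p : ℕ) [Fact p.Prime] (hp : p ≠ 2)
    (k : Type*) [Field k] [IsAlgClosed k] [CharP k p] [Algebra (ZMod p) k]
    (σ0 : ℕ)
    (Vt : Type*) [AddCommGroup Vt] [Module (ZMod p) Vt]
    (b : LinearMap.BilinForm (ZMod p) Vt)
    (hsymm : ∀ x y, b x y = b y x) (hnd : Nondeg b)
    (hdim : Module.finrank (ZMod p) Vt = 2 * σ0 + 2)
    (e : Vt) (hee : b e e = 0)
    (Kt : Submodule k (k ⊗[ZMod p] Vt))
    (hKt : IsCharSub (σ0 + 1) b Kt)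
    (heK : (1 : k) ⊗ₜ[ZMod p] e ∉ Kt)
    (hσ : 2 ≤ σ0 - Module.finrank (ZMod p) ↥(KcapV (piV k b e hee Kt))) :
    ∃ v : Vt, v ≠ 0 ∧ b v v = 0 ∧ b v e ≠ 0 ∧ (1 : k) ⊗ₜ[ZMod p] v ∉ Kt ∧
      ∀ x : Vt, (1 : k) ⊗ₜ[ZMod p] x ∈ Kt → b v x = 0 := by
  have : FiniteDimensional (ZMod p) Vt := Module.finite_of_finrank_pos (by omega)
  have hb : b.IsSymm := ⟨hsymm⟩
  have hb_nd : b.Nondegenerate := hb.isRefl.nondegenerate_iff_separatingLeft.mpr hnd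
  have hchar : ringChar (ZMod p) ≠ 2 := by rwa [ZMod.ringChar_zmod_n]
  have hW : finrank (ZMod p) ↥(KcapV Kt) ≤ finrank (ZMod p) ↥(KcapV (piV k b e hee Kt)) + 1 :=
    (Submodule.finrank_le_finrank_inf_ker_add_one _ (b e)).trans
      (Nat.add_le_add_right (finrank_KcapV_inf_perp_le hee heK) 1)
  obtain ⟨v, hvK, hvv, hve, hvW⟩ := LinearMap.BilinForm.exists_isotropic_notMem_orthogonal
    hchar hb hb_nd (KcapV_isOrtho hKt.1) hee heK (by omega)
  exact ⟨v, by rintro rfl; simp at hve, hvv, hve, hvK, hvW⟩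

theorem stmt7 (p : ℕ) [Fact p.Prime] (hp : p ≠ 2)
    (k : Type*) [Field k] [IsAlgClosed k] [CharP k p] [Algebra (ZMod p) k]
    (σ0 : ℕ)
    (Vt : Type*) [AddCommGroup Vt] [Module (ZMod p) Vt]
    (b : LinearMap.BilinForm (ZMod p) Vt)
    (hsymm : ∀ x y, b x y = b y x) (hnd : Nondeg b) (hnn : NonNeutral b)
    (hdim : Module.finrank (ZMod p) Vt = 2 * σ0 + 2)
    (V : Type*) [AddCommGroup V] [Module (ZMod p) V]
    (bV : LinearMap.BilinForm (ZMod p) V)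
    (j : V →ₗ[ZMod p] Vt) (hjinj : Function.Injective j)
    (hcompat : ∀ x y, b (j x) (j y) = bV x y)
    (e f : Vt) (hee : b e e = 0) (hff : b f f = 0) (hef : b e f = -1)
    (hje : ∀ x, b e (j x) = 0) (hjf : ∀ x, b f (j x) = 0)
    (hspan : LinearMap.range j ⊔ Submodule.span (ZMod p) {e, f} = ⊤)
    (Kt : Submodule k (k ⊗[ZMod p] Vt))
    (hKt : IsCharSub (σ0 + 1) b Kt)
    (heK : (1 : k) ⊗ₜ[ZMod p] e ∉ Kt)
    (hσ : 2 ≤ σ0 - Module.finrank (ZMod p) ↥(KcapV (piV k b e hee Kt))) :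
    ∃ v : Vt, v ≠ 0 ∧ b v v = 0 ∧ b v e ≠ 0 ∧ (1 : k) ⊗ₜ[ZMod p] v ∉ Kt ∧
      ∀ x : Vt, (1 : k) ⊗ₜ[ZMod p] x ∈ Kt → b v x = 0 :=
  stmt7_general p hp k σ0 Vt b hsymm hnd hdim e hee Kt hKt heK hσ
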